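/- Let G be a linear influence game with n players whose weights are symmetric (w_{ij} = w_{ji} for all distinct i, j), and let Φ(x) = Σ_{t=1}^n x_t·(Σ_{i≠t} x_i w_{it}/2 − b_t). Then every global maximizer x* of Φ over {−1,1}^n is a pure-strategy Nash equilibrium of G; in particular, every LIG with symmetric weights has at least one pure-strategy Nash equilibrium. -/

import Mathlib

/-!
With symmetric weights the potential `Φ` is affine in each coordinate, and its slope in `x i`
is exactly player `i`'s net incentive `Σ_{k ≠ i} w k i * x k - b i`. Flipping `x i` therefore
changes `Φ` by `-2 * u_i(x)`, so at a maximizer of `Φ` over the finite set `{-1, 1}ⁿ` no player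
has a negative payoff, which is the PSNE condition.
-/

open Finset

namespace LinearInfluenceGame

def signVectors (ι : Type*) : Set (ι → ℝ) := {x | ∀ i, x i = 1 ∨ x i = -1}

theorem signVectors_finite {ι : Type*} [Finite ι] : (signVectors ι).Finite :=
  (Set.Finite.pi (t := fun _ : ι => ({1, -1} : Set ℝ)) fun _ => by simp).subset
    fun x hx i _ => hx i

theorem signVectors_nonempty {ι : Type*} : (signVectors ι).Nonempty :=
  ⟨1, fun _ => Or.inl rfl⟩

theorem update_neg_mem_signVectors {ι : Type*} [DecidableEq ι] {x : ι → ℝ}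
    (hx : x ∈ signVectors ι) (i : ι) : Function.update x i (-x i) ∈ signVectors ι := by
  intro k
  rcases eq_or_ne k i with rfl | hk
  · rcases hx k with h | h <;> simp [h]
  · simpa [hk] using hx k

variable {ι : Type*} [Fintype ι] [DecidableEq ι]

def influence (w : ι → ι → ℝ) (x : ι → ℝ) (i : ι) : ℝ :=
  ∑ k ∈ univ.filter (· ≠ i), w k i * x k

noncomputable def potential (w : ι → ι → ℝ) (b x : ι → ℝ) : ℝ :=
  ∑ t, x t * ((∑ k ∈ univ.filter (· ≠ t), x k * w k t / 2) - b t)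

def IsPureNashEquilibrium (w : ι → ι → ℝ) (b x : ι → ℝ) : Prop :=
  ∀ i, x i * (influence w x i - b i) ≥ 0

theorem potential_add_single {w : ι → ι → ℝ} (hw : ∀ i j, i ≠ j → w i j = w j i)
    (b x : ι → ℝ) (i : ι) (c : ℝ) :
    potential w b (x + Pi.single i c) = potential w b x + c * (influence w x i - b i) := by
  have inner_sum (t : ι) :
      ∑ k ∈ univ.filter (· ≠ t), (x + Pi.single i c : ι → ℝ) k * w k t / 2 =
      ∑ k ∈ univ.filter (· ≠ t), x k * w k t / 2 + if t ≠ i then c * w i t / 2 else 0 := by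
    simp [add_mul, add_div, sum_add_distrib, Pi.single_apply, ite_div, eq_comm]
  -- symmetry of `w` turns the change of the other players' terms into a second copy of the
  -- change of player `i`'s own term
  have cross : ∑ t, x t * (if t ≠ i then c * w i t / 2 else 0) = c * (influence w x i / 2) := by
    simp only [influence, mul_sum, sum_div, mul_ite, mul_zero, ← sum_filter]
    refine sum_congr rfl fun t ht => ?_
    rw [hw i t (mem_filter.1 ht).2.symm]
    ring
  have self_term : ∑ k ∈ univ.filter (· ≠ i), x k * w k i / 2 = influence w x i / 2 := by
    simp only [influence, sum_div]
    exact sum_congr rfl fun k _ => by ring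
  unfold potential
  simp_rw [inner_sum]
  simp only [Pi.add_apply, add_mul, sum_add_distrib, mul_add, add_sub_right_comm _ (ite _ _ _)]
  rw [cross]
  simp only [Pi.single_apply, ite_mul, zero_mul, sum_ite_eq', mem_univ, if_true, ne_eq,
    not_true_eq_false, if_false, mul_zero, add_zero, self_term]
  ring

theorem potential_update {w : ι → ι → ℝ} (hw : ∀ i j, i ≠ j → w i j = w j i)
    (b x : ι → ℝ) (i : ι) (v : ℝ) :
    potential w b (Function.update x i v) =
      potential w b x + (v - x i) * (influence w x i - b i) := by
  have hupdate : Function.update x i v = x + Pi.single i (v - x i) := by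
    ext k
    rcases eq_or_ne k i with rfl | hk <;> simp [*]
  rw [hupdate, potential_add_single hw]

theorem isPureNashEquilibrium_of_isMaxOn {w : ι → ι → ℝ} (hw : ∀ i j, i ≠ j → w i j = w j i)
    {b x : ι → ℝ} (hx : x ∈ signVectors ι) (hmax : IsMaxOn (potential w b) (signVectors ι) x) :
    IsPureNashEquilibrium w b x := by
  intro i
  have hflip := isMaxOn_iff.1 hmax _ (update_neg_mem_signVectors hx i)
  rw [potential_update hw] at hflip
  linarith

theorem exists_isPureNashEquilibrium {w : ι → ι → ℝ} (hw : ∀ i j, i ≠ j → w i j = w j i)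
    (b : ι → ℝ) : ∃ x ∈ signVectors ι, IsPureNashEquilibrium w b x := by
  obtain ⟨x, hx, hmax⟩ :=
    (signVectors ι).exists_max_image (potential w b) signVectors_finite signVectors_nonempty
  exact ⟨x, hx, isPureNashEquilibrium_of_isMaxOn hw hx (isMaxOn_iff.2 hmax)⟩

end LinearInfluenceGame

/-- For an LIG with symmetric weights, every global maximizer of the potential
`Φ` over `{-1,1}^n` is a PSNE; in particular every symmetric-weight LIG has a PSNE. -/
theorem symmetric_lig_maximizer_psne (n : ℕ)
    (w : Fin n → Fin n → ℝ) (b : Fin n → ℝ)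
    (hsym : ∀ i j : Fin n, i ≠ j → w i j = w j i) :
    let Φ : (Fin n → ℝ) → ℝ := fun y =>
      ∑ t, y t * ((∑ i ∈ univ.filter (· ≠ t), y i * w i t / 2) - b t)
    (∀ x : Fin n → ℝ, (∀ i, x i = 1 ∨ x i = -1) →
        (∀ y : Fin n → ℝ, (∀ i, y i = 1 ∨ y i = -1) → Φ y ≤ Φ x) →
        ∀ i, x i * ((∑ k ∈ univ.filter (· ≠ i), w k i * x k) - b i) ≥ 0) ∧
    (∃ x : Fin n → ℝ, (∀ i, x i = 1 ∨ x i = -1) ∧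
        ∀ i, x i * ((∑ k ∈ univ.filter (· ≠ i), w k i * x k) - b i) ≥ 0) :=
  ⟨fun _ hx hmax =>
    LinearInfluenceGame.isPureNashEquilibrium_of_isMaxOn hsym hx (isMaxOn_iff.2 hmax),
    LinearInfluenceGame.exists_isPureNashEquilibrium hsym b⟩
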